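/- Let p : ℝ → Matₙ(ℝ) be continuous with p(u) symmetric for all u. For k ∈ ℝ and J : ℝ → ℝⁿ a twice differentiable solution of the Jacobi equation J''(u) + p(u)·J(u) = 0, define the map T(k,J) : ℝ × ℝ × ℝⁿ → ℝ × ℝ × ℝⁿ by T(k,J)(u,v,x) = ( u, v + k + ⟨J'(u), x⟩ + (1/2)·⟨J(u), J'(u)⟩, x + J(u) ). Then for any two such pairs (k,J) and (k',J'): T(k',J') ∘ T(k,J) = T( k + k' + (1/2)·ω(J,J'), J + J' ), where ω(J,J') denotes the constant ⟨J(u), d/du J'(u)⟩ − ⟨J'(u), d/du J(u)⟩ (independent of u). In other words, (k,J) ↦ T(k,J) is an action of the Heisenberg group of the symplectic vector space of Jacobi fields. -/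

import Mathlib

open Matrix

/-- The Heisenberg isometry `T(k,J)(u,v,x) = (u, v + k + ⟨J'(u),x⟩ + (1/2)⟨J(u),J'(u)⟩, x + J(u))`
of a Brinkmann plane wave, where `dJ` denotes the derivative `J'`. -/
noncomputable def heisT {n : ℕ} (k : ℝ) (J dJ : ℝ → (Fin n → ℝ)) :
    ℝ × ℝ × (Fin n → ℝ) → ℝ × ℝ × (Fin n → ℝ) :=
  fun q => (q.1, q.2.1 + k + dJ q.1 ⬝ᵥ q.2.2 + (1/2) * (J q.1 ⬝ᵥ dJ q.1), q.2.2 + J q.1)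

lemma omega_const {n : ℕ} (p : ℝ → Matrix (Fin n) (Fin n) ℝ)
    (hpsym : ∀ u, (p u)ᵀ = p u) (J dJ K dK : ℝ → (Fin n → ℝ))
    (hJ : ∀ u, HasDerivAt J (dJ u) u)
    (hJ' : ∀ u, HasDerivAt dJ (-(p u *ᵥ J u)) u)
    (hK : ∀ u, HasDerivAt K (dK u) u)
    (hK' : ∀ u, HasDerivAt dK (-(p u *ᵥ K u)) u)
    (u u₀ : ℝ) :
    J u ⬝ᵥ dK u - K u ⬝ᵥ dJ u = J u₀ ⬝ᵥ dK u₀ - K u₀ ⬝ᵥ dJ u₀ := by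
  set f : ℝ → ℝ := fun u => J u ⬝ᵥ dK u - K u ⬝ᵥ dJ u with hf
  have hderiv : ∀ u, HasDerivAt f 0 u := by
    intro u
    have hJi := hasDerivAt_pi.1 (hJ u)
    have hJ'i := hasDerivAt_pi.1 (hJ' u)
    have hKi := hasDerivAt_pi.1 (hK u)
    have hK'i := hasDerivAt_pi.1 (hK' u)
    have h1 : HasDerivAt (fun u => J u ⬝ᵥ dK u)
        (dJ u ⬝ᵥ dK u + J u ⬝ᵥ (-(p u *ᵥ K u))) u := by
      simp only [dotProduct]
      refine (HasDerivAt.fun_sum (fun i _ => (hJi i).fun_mul (hK'i i))).congr_deriv ?_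
      rw [← Finset.sum_add_distrib]
    have h2 : HasDerivAt (fun u => K u ⬝ᵥ dJ u)
        (dK u ⬝ᵥ dJ u + K u ⬝ᵥ (-(p u *ᵥ J u))) u := by
      simp only [dotProduct]
      refine (HasDerivAt.fun_sum (fun i _ => (hKi i).fun_mul (hJ'i i))).congr_deriv ?_
      rw [← Finset.sum_add_distrib]
    have h3 := h1.sub h2
    have hz : dJ u ⬝ᵥ dK u + J u ⬝ᵥ (-(p u *ᵥ K u)) -
        (dK u ⬝ᵥ dJ u + K u ⬝ᵥ (-(p u *ᵥ J u))) = 0 := by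
      have hs : J u ⬝ᵥ (p u *ᵥ K u) = K u ⬝ᵥ (p u *ᵥ J u) := by
        rw [dotProduct_mulVec, ← hpsym u, vecMul_transpose, dotProduct_comm, hpsym]
      simp only [dotProduct_neg, hs, dotProduct_comm (dJ u) (dK u)]
      ring
    rw [← hz]; exact h3
  have hdiff : Differentiable ℝ f := fun u => (hderiv u).differentiableAt
  have := is_const_of_deriv_eq_zero hdiff (fun u => (hderiv u).deriv) u u₀
  simpa [hf] using this

/-- for two Jacobi fields `J`, `K` of a Brinkmann plane wave (solutions of
`J'' + pJ = 0` with `p` continuous symmetric), the isometries `T(k,J)` compose according to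
the Heisenberg group law: `T(k',K) ∘ T(k,J) = T(k + k' + (1/2)ω(J,K), J + K)`, where
`ω(J,K) = ⟨J, K'⟩ − ⟨K, J'⟩` is the (constant) symplectic pairing, evaluated at any `u₀`. -/
theorem heisenberg_group_action {n : ℕ} (p : ℝ → Matrix (Fin n) (Fin n) ℝ)
    (hp : Continuous p) (hpsym : ∀ u, (p u)ᵀ = p u)
    (k k' : ℝ) (J dJ K dK : ℝ → (Fin n → ℝ))
    (hJ : ∀ u, HasDerivAt J (dJ u) u)
    (hJ' : ∀ u, HasDerivAt dJ (-(p u *ᵥ J u)) u)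
    (hK : ∀ u, HasDerivAt K (dK u) u)
    (hK' : ∀ u, HasDerivAt dK (-(p u *ᵥ K u)) u) :
    ∀ u₀ : ℝ,
      heisT k' K dK ∘ heisT k J dJ =
      heisT (k + k' + (1/2) * (J u₀ ⬝ᵥ dK u₀ - K u₀ ⬝ᵥ dJ u₀)) (J + K) (dJ + dK) := by
  intro u₀
  funext q
  obtain ⟨u, v, x⟩ := q
  have hω := omega_const p hpsym J dJ K dK hJ hJ' hK hK' u u₀
  simp only [heisT, Function.comp_apply, Pi.add_apply, Prod.mk.injEq, dotProduct_add,
    add_dotProduct]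
  refine ⟨trivial, ?_, add_assoc _ _ _⟩
  have hc : dK u ⬝ᵥ J u = J u ⬝ᵥ dK u := dotProduct_comm _ _
  linarith [hω, hc]
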